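/- arXiv:2510.06986 — 6 statements merged into one kernel-verified Lean document; each statement's English description precedes it below -/
import Mathlib

section
/- Let X be a nonempty convex subset of ℝⁿ, let α > 0, and let f : X → ℝ be α-strongly concave on X (i.e. x ↦ f(x) + (α/2)‖x‖² is concave on X). Let g : X → ℝ satisfy |f(x) − g(x)| ≤ ε for all x ∈ X, for some ε ≥ 0. If x* maximizes f over X and y* maximizes g over X, then ‖x* − y*‖ ≤ 2·√(ε/α). -/
/-!
Strong concavity gives quadratic growth at a maximizer: comparing `f` at `x*` with `f` on the
segment from `x*` towards `y*` and letting the segment shrink to `x*` yields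
`α/2 ‖x* − y*‖² ≤ f x* − f y*`. On the other hand, since `y*` maximizes `g` and `g` is
`ε`-close to `f`, the value gap `f x* − f y*` is at most `2ε`.
-/

open Filter Set Topology

theorem IsMaxOn.sub_le_two_mul_of_abs_sub_le {ι : Type*} {s : Set ι} {f g : ι → ℝ} {x y : ι}
    {ε : ℝ} (hmax : IsMaxOn g s y) (hfg : ∀ z ∈ s, |f z - g z| ≤ ε) (hxs : x ∈ s) (hys : y ∈ s) :
    f x - f y ≤ 2 * ε := by
  have hgxy : g x ≤ g y := hmax hxs
  have hfgx := abs_le.1 (hfg x hxs)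
  have hfgy := abs_le.1 (hfg y hys)
  linarith [hfgx.2, hfgy.1]

variable {E : Type*} [NormedAddCommGroup E] [NormedSpace ℝ E] {s : Set E} {φ : ℝ → ℝ}
  {f : E → ℝ} {x y : E}

theorem UniformConcaveOn.le_sub_of_isMaxOn (hf : UniformConcaveOn s φ f) (hx : x ∈ s)
    (hy : y ∈ s) (hmax : IsMaxOn f s x) : φ ‖x - y‖ ≤ f x - f y := by
  have hsegment : ∀ t ∈ Ioo (0 : ℝ) 1, (1 - t) * φ ‖x - y‖ ≤ f x - f y := by
    rintro t ⟨ht0, ht1⟩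
    have hconc := hf.2 hx hy (sub_nonneg.2 ht1.le) ht0.le (sub_add_cancel 1 t)
    have hle : f ((1 - t) • x + t • y) ≤ f x :=
      hmax (hf.1 hx hy (sub_nonneg.2 ht1.le) ht0.le (sub_add_cancel 1 t))
    simp only [smul_eq_mul] at hconc
    refine le_of_mul_le_mul_left ?_ ht0
    linarith
  have hlim : Tendsto (fun t : ℝ => (1 - t) * φ ‖x - y‖) (𝓝[>] 0) (𝓝 (φ ‖x - y‖)) := by
    have hcont : Continuous fun t : ℝ => (1 - t) * φ ‖x - y‖ := by fun_prop
    exact (hcont.tendsto' 0 _ (by simp)).mono_left nhdsWithin_le_nhds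
  exact le_of_tendsto hlim (eventually_of_mem (Ioo_mem_nhdsGT zero_lt_one) hsegment)

theorem StrongConcaveOn.sq_norm_sub_le_sub_of_isMaxOn {m : ℝ} (hf : StrongConcaveOn s m f)
    (hx : x ∈ s) (hy : y ∈ s) (hmax : IsMaxOn f s x) : m / 2 * ‖x - y‖ ^ 2 ≤ f x - f y :=
  UniformConcaveOn.le_sub_of_isMaxOn hf hx hy hmax

theorem maximizer_stability_strongly_concave_general
    (n : ℕ) (X : Set (EuclideanSpace ℝ (Fin n)))
    (α : ℝ) (hα : 0 < α)
    (f g : EuclideanSpace ℝ (Fin n) → ℝ)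
    (hsc : ConcaveOn ℝ X (fun x => f x + (α / 2) * ‖x‖ ^ 2))
    (ε : ℝ)
    (hfg : ∀ x ∈ X, |f x - g x| ≤ ε)
    (xstar ystar : EuclideanSpace ℝ (Fin n))
    (hxmem : xstar ∈ X) (hymem : ystar ∈ X)
    (hxmax : ∀ x ∈ X, f x ≤ f xstar)
    (hymax : ∀ x ∈ X, g x ≤ g ystar) :
    ‖xstar - ystar‖ ≤ 2 * Real.sqrt (ε / α) := by
  have hgrowth : α / 2 * ‖xstar - ystar‖ ^ 2 ≤ f xstar - f ystar :=
    (strongConcaveOn_iff_convex.2 hsc).sq_norm_sub_le_sub_of_isMaxOn hxmem hymem hxmax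
  have hgap : f xstar - f ystar ≤ 2 * ε :=
    IsMaxOn.sub_le_two_mul_of_abs_sub_le hymax hfg hxmem hymem
  have hsq : (‖xstar - ystar‖ / 2) ^ 2 ≤ ε / α := by
    rw [le_div_iff₀ hα]
    linarith
  linarith [Real.le_sqrt_of_sq_le hsq]

/-- Lipschitz stability of maximizers of strongly concave objectives under
uniform objective perturbation: if `f` is `α`-strongly concave on a convex set
`X`, `|f − g| ≤ ε` on `X`, `x*` maximizes `f` on `X` and `y*` maximizes `g` on
`X`, then `‖x* − y*‖ ≤ 2√(ε/α)`. -/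
theorem maximizer_stability_strongly_concave
    (n : ℕ) (X : Set (EuclideanSpace ℝ (Fin n)))
    (hne : X.Nonempty) (hconv : Convex ℝ X)
    (α : ℝ) (hα : 0 < α)
    (f g : EuclideanSpace ℝ (Fin n) → ℝ)
    (hsc : ConcaveOn ℝ X (fun x => f x + (α / 2) * ‖x‖ ^ 2))
    (ε : ℝ) (hε : 0 ≤ ε)
    (hfg : ∀ x ∈ X, |f x - g x| ≤ ε)
    (xstar ystar : EuclideanSpace ℝ (Fin n))
    (hxmem : xstar ∈ X) (hymem : ystar ∈ X)
    (hxmax : ∀ x ∈ X, f x ≤ f xstar)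
    (hymax : ∀ x ∈ X, g x ≤ g ystar) :
    ‖xstar - ystar‖ ≤ 2 * Real.sqrt (ε / α) :=
  maximizer_stability_strongly_concave_general n X α hα f g hsc ε hfg xstar ystar hxmem hymem hxmax
    hymax
end

section
/- Let x, μ̄ ∈ ℝⁿ, let Σ̄ ∈ ℝⁿˣⁿ, let θ ≥ 0, and let δ_μ, δ_Σ ≥ 0. Then the minimum of μᵀx − (θ/2)·xᵀΣx over all pairs (μ, Σ) with ‖μ − μ̄‖₂ ≤ δ_μ and ‖Σ − Σ̄‖_F ≤ δ_Σ equals μ̄ᵀx − δ_μ·‖x‖₂ − (θ/2)·xᵀΣ̄x − (θ/2)·δ_Σ·‖x‖₂², and this minimum is attained. -/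
/-!
The two uncertain parameters decouple. The map `μ ↦ μᵀx` is linear, and so is `Σ ↦ xᵀΣx`, being
the Frobenius inner product of `Σ` with `xxᵀ`, where `‖xxᵀ‖_F = ‖x‖²`. By Cauchy–Schwarz a linear
functional `⟪a, ·⟫` ranges over a closed ball of radius `δ` around `c` with extreme values
`⟪a, c⟫ ± δ‖a‖`, attained at `c ± (δ/‖a‖) a`. Since `θ ≥ 0`, the robust objective is minimised by
minimising `μᵀx` and maximising `xᵀΣx` separately.
-/

open Matrix
open scoped RealInnerProductSpace

section InnerProductSpace

variable {E : Type*} [NormedAddCommGroup E] [InnerProductSpace ℝ E]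

theorem isGreatest_inner_closedBall (x c : E) {δ : ℝ} (hδ : 0 ≤ δ) :
    IsGreatest ((fun μ => ⟪x, μ⟫) '' Metric.closedBall c δ) (⟪x, c⟫ + δ * ‖x‖) := by
  refine ⟨⟨c + (δ * ‖x‖⁻¹) • x, ?_, ?_⟩, ?_⟩
  · rw [Metric.mem_closedBall, dist_eq_norm, add_sub_cancel_left, norm_smul,
      Real.norm_of_nonneg (by positivity), mul_assoc]
    exact mul_le_of_le_one_right hδ (inv_mul_le_one_of_le₀ le_rfl (norm_nonneg x))
  · simp only [inner_add_right, real_inner_smul_right, real_inner_self_eq_norm_sq]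
    by_cases hx : x = 0
    · simp [hx]
    · field_simp
  · rintro _ ⟨μ, hμ, rfl⟩
    calc ⟪x, μ⟫ = ⟪x, c⟫ + ⟪x, μ - c⟫ := by rw [inner_sub_right]; ring
      _ ≤ ⟪x, c⟫ + ‖x‖ * ‖μ - c‖ := by gcongr; exact real_inner_le_norm x _
      _ ≤ ⟪x, c⟫ + δ * ‖x‖ := by
        rw [mul_comm, ← dist_eq_norm]; grw [Metric.mem_closedBall.1 hμ]

theorem isLeast_inner_closedBall (x c : E) {δ : ℝ} (hδ : 0 ≤ δ) :
    IsLeast ((fun μ => ⟪x, μ⟫) '' Metric.closedBall c δ) (⟪x, c⟫ - δ * ‖x‖) := by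
  obtain ⟨⟨μ₀, hμ₀, hμ₀x⟩, hmax⟩ := isGreatest_inner_closedBall (-x) c hδ
  simp only [inner_neg_left, norm_neg] at hμ₀x
  refine ⟨⟨μ₀, hμ₀, by linarith⟩, ?_⟩
  rintro _ ⟨μ, hμ, rfl⟩
  have := hmax ⟨μ, hμ, rfl⟩
  simp only [inner_neg_left, norm_neg] at this
  linarith

end InnerProductSpace

theorem EuclideanSpace.real_inner_eq_dotProduct {ι : Type*} [Fintype ι]
    (x y : EuclideanSpace ℝ ι) :
    ⟪x, y⟫ = y ⬝ᵥ x := by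
  simp [EuclideanSpace.inner_eq_star_dotProduct]

section FrobeniusBall

variable {m n : Type*} [Fintype m] [Fintype n]

theorem norm_toLp_vec (A : Matrix m n ℝ) : ‖WithLp.toLp 2 A.vec‖ = √(∑ i, ∑ j, A i j ^ 2) := by
  rw [EuclideanSpace.norm_eq, Fintype.sum_prod_type, Finset.sum_comm]
  simp [vec]

theorem inner_toLp_vec_vecMulVec (x : m → ℝ) (y : n → ℝ) (S : Matrix m n ℝ) :
    ⟪WithLp.toLp 2 (vecMulVec x y).vec, WithLp.toLp 2 S.vec⟫ = x ⬝ᵥ S *ᵥ y := by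
  rw [EuclideanSpace.real_inner_eq_dotProduct, vec_dotProduct_vec, mul_vecMulVec, trace_vecMulVec,
    mulVec_transpose, ← dotProduct_mulVec]

theorem norm_toLp_vec_vecMulVec (x : EuclideanSpace ℝ m) (y : EuclideanSpace ℝ n) :
    ‖WithLp.toLp 2 (vecMulVec x y).vec‖ = ‖x‖ * ‖y‖ := by
  rw [norm_toLp_vec, EuclideanSpace.norm_eq x, EuclideanSpace.norm_eq y,
    ← Real.sqrt_mul (by positivity)]
  simp only [Real.norm_eq_abs, sq_abs, vecMulVec_apply, mul_pow, Finset.sum_mul_sum]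

theorem isGreatest_dotProduct_mulVec_frobeniusBall (x : EuclideanSpace ℝ n) (Sbar : Matrix n n ℝ)
    {δ : ℝ} (hδ : 0 ≤ δ) :
    IsGreatest ((fun S => x ⬝ᵥ S *ᵥ x) '' {S | √(∑ i, ∑ j, (S i j - Sbar i j) ^ 2) ≤ δ})
      (x ⬝ᵥ Sbar *ᵥ x + δ * ‖x‖ ^ 2) := by
  let g : Matrix n n ℝ → EuclideanSpace ℝ (n × n) := fun S => WithLp.toLp 2 S.vec
  have hg : Function.Surjective g := (WithLp.toLp_surjective 2).comp vec_bijective.2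
  have hball :
      {S | √(∑ i, ∑ j, (S i j - Sbar i j) ^ 2) ≤ δ} = g ⁻¹' Metric.closedBall (g Sbar) δ := by
    ext S
    rw [Set.mem_preimage, mem_closedBall_iff_norm, ← WithLp.toLp_sub, ← vec_sub, norm_toLp_vec]
    rfl
  have hform : (fun S => x ⬝ᵥ S *ᵥ x) = (fun v => ⟪g (vecMulVec x x), v⟫) ∘ g :=
    funext fun S => (inner_toLp_vec_vecMulVec x x S).symm
  rw [hball, hform, Set.image_comp, Set.image_preimage_eq _ hg]
  convert isGreatest_inner_closedBall (g (vecMulVec x x)) (g Sbar) hδ using 1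
  rw [inner_toLp_vec_vecMulVec, norm_toLp_vec_vecMulVec, sq]

end FrobeniusBall

/-- Closed-form inner minimization of the distributionally robust objective:
the minimum of `μᵀx − (θ/2)xᵀΣx` over the uncertainty set
`{(μ, Σ) : ‖μ − μ̄‖₂ ≤ δ_μ, ‖Σ − Σ̄‖_F ≤ δ_Σ}` equals
`μ̄ᵀx − δ_μ‖x‖₂ − (θ/2)xᵀΣ̄x − (θ/2)δ_Σ‖x‖₂²`, and it is attained. -/
theorem robust_objective_inner_minimization
    (n : ℕ) (x μbar : EuclideanSpace ℝ (Fin n))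
    (Sbar : Matrix (Fin n) (Fin n) ℝ)
    (θ : ℝ) (hθ : 0 ≤ θ) (δmu δS : ℝ) (hδmu : 0 ≤ δmu) (hδS : 0 ≤ δS) :
    IsLeast
      {y : ℝ | ∃ (μ : EuclideanSpace ℝ (Fin n)) (S : Matrix (Fin n) (Fin n) ℝ),
          ‖μ - μbar‖ ≤ δmu ∧
          Real.sqrt (∑ i, ∑ j, (S i j - Sbar i j) ^ 2) ≤ δS ∧
          y = μ ⬝ᵥ x - θ / 2 * (x ⬝ᵥ S.mulVec x)}
      (μbar ⬝ᵥ x - δmu * ‖x‖ - θ / 2 * (x ⬝ᵥ Sbar.mulVec x) - θ / 2 * δS * ‖x‖ ^ 2) := by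
  obtain ⟨⟨μ₀, hμ₀, hμ₀x⟩, hlin⟩ := isLeast_inner_closedBall x μbar hδmu
  obtain ⟨⟨S₀, hS₀, hS₀x⟩, hquad⟩ := isGreatest_dotProduct_mulVec_frobeniusBall x Sbar hδS
  simp only [EuclideanSpace.real_inner_eq_dotProduct] at hμ₀x hlin
  dsimp only at hS₀x
  refine ⟨⟨μ₀, S₀, mem_closedBall_iff_norm.1 hμ₀, hS₀, by rw [hμ₀x, hS₀x]; ring⟩, ?_⟩
  rintro _ ⟨μ, S, hμ, hS, rfl⟩
  have hμx := hlin ⟨μ, mem_closedBall_iff_norm.2 hμ, rfl⟩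
  have hSx := hquad ⟨S, hS, rfl⟩
  dsimp only at hμx hSx
  linarith [mul_le_mul_of_nonneg_left hSx (by positivity : 0 ≤ θ / 2)]
end

section
/- Let p > 1 and let κ₁, κ₂ ∈ ℝⁿ parameterize the nonlinear transaction costs φ_κ(x) = Σⱼ κⱼ·xⱼᵖ on the nonnegative orthant, whose gradient has coordinates p·κⱼ·xⱼ^{p−1}. For t = 1,…,T let Σᵗ ∈ ℝⁿˣⁿ be symmetric positive definite matrices and xᵗ ∈ ℝⁿ portfolios with xᵗ ≥ 0, and suppose θ₁, θ₂ ∈ ℝ satisfy, for every t and every coordinate j, θ₁·(Σᵗxᵗ)ⱼ + p·κ₁ⱼ·(xᵗⱼ)^{p−1} = θ₂·(Σᵗxᵗ)ⱼ + p·κ₂ⱼ·(xᵗⱼ)^{p−1}. If (i) there exist indices s, t and a coordinate j with xᵗⱼ = xˢⱼ and (Σᵗxᵗ)ⱼ ≠ (Σˢxˢ)ⱼ, then θ₁ = θ₂; and (ii) if additionally for a coordinate j there exists t with xᵗⱼ > 0, then κ₁ⱼ = κ₂ⱼ. -/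
theorem eq_of_mul_add_eq_mul_add_of_ne {R : Type*} [CommRing R] [NoZeroDivisors R]
    {θ₁ θ₂ a a' b₁ b₂ : R} (h : θ₁ * a + b₁ = θ₂ * a + b₂) (h' : θ₁ * a' + b₁ = θ₂ * a' + b₂)
    (ha : a ≠ a') : θ₁ = θ₂ :=
  mul_right_cancel₀ (sub_ne_zero.mpr ha) (by linear_combination h - h')

theorem eq_of_mul_mul_rpow_eq {p κ₁ κ₂ y : ℝ} (hp : p ≠ 0) (hy : 0 < y)
    (h : p * κ₁ * y ^ (p - 1) = p * κ₂ * y ^ (p - 1)) : κ₁ = κ₂ :=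
  mul_left_cancel₀ hp (mul_right_cancel₀ (Real.rpow_pos_of_pos hy _).ne' h)

theorem identifiability_nonlinear_costs_general
    (n T : ℕ) (p : ℝ) (hp : 1 < p)
    (κ₁ κ₂ : Fin n → ℝ)
    (S : Fin T → Matrix (Fin n) (Fin n) ℝ)
    (x : Fin T → (Fin n → ℝ))
    (θ₁ θ₂ : ℝ)
    (hstat : ∀ (t : Fin T) (j : Fin n),
        θ₁ * (S t).mulVec (x t) j + p * κ₁ j * (x t j) ^ (p - 1) =
        θ₂ * (S t).mulVec (x t) j + p * κ₂ j * (x t j) ^ (p - 1))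
    (hvar : ∃ (s t : Fin T) (j : Fin n),
        x t j = x s j ∧ (S t).mulVec (x t) j ≠ (S s).mulVec (x s) j) :
    θ₁ = θ₂ ∧ ∀ j : Fin n, (∃ t : Fin T, 0 < x t j) → κ₁ j = κ₂ j := by
  obtain ⟨s, t, j, hxe, hSne⟩ := hvar
  have hstat_t := hstat t j
  rw [hxe] at hstat_t
  have hθ : θ₁ = θ₂ := eq_of_mul_add_eq_mul_add_of_ne hstat_t (hstat s j) hSne
  subst hθ
  exact ⟨rfl, fun j ⟨t, hxt⟩ =>
    eq_of_mul_mul_rpow_eq (by linarith) hxt (add_left_cancel (hstat t j))⟩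

/-- Identifiability with nonlinear power transaction costs (Proposition A.1):
with costs `φ_κ(x) = Σⱼ κⱼ xⱼᵖ` (`p > 1`) on the nonnegative orthant, whose
gradient has coordinates `p κⱼ xⱼ^{p−1}`, suppose two parameter pairs
`(θ₁, κ₁)` and `(θ₂, κ₂)` satisfy the same coordinatewise stationarity system.
(i) If there exist observations `s, t` and a coordinate `j` with
`xᵗⱼ = xˢⱼ` and `(Σᵗxᵗ)ⱼ ≠ (Σˢxˢ)ⱼ`, then `θ₁ = θ₂`; and (ii) additionally,
for every coordinate `j` such that `xᵗⱼ > 0` for some `t`, `κ₁ⱼ = κ₂ⱼ`. -/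
theorem identifiability_nonlinear_costs
    (n T : ℕ) (p : ℝ) (hp : 1 < p)
    (κ₁ κ₂ : Fin n → ℝ)
    (S : Fin T → Matrix (Fin n) (Fin n) ℝ)
    (hSym : ∀ t, (S t).IsSymm)
    (hPD : ∀ t, (S t).PosDef)
    (x : Fin T → (Fin n → ℝ))
    (hxnonneg : ∀ t i, 0 ≤ x t i)
    (θ₁ θ₂ : ℝ)
    (hstat : ∀ (t : Fin T) (j : Fin n),
        θ₁ * (S t).mulVec (x t) j + p * κ₁ j * (x t j) ^ (p - 1) =
        θ₂ * (S t).mulVec (x t) j + p * κ₂ j * (x t j) ^ (p - 1))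
    (hvar : ∃ (s t : Fin T) (j : Fin n),
        x t j = x s j ∧ (S t).mulVec (x t) j ≠ (S s).mulVec (x s) j) :
    θ₁ = θ₂ ∧ ∀ j : Fin n, (∃ t : Fin T, 0 < x t j) → κ₁ j = κ₂ j :=
  identifiability_nonlinear_costs_general n T p hp κ₁ κ₂ S x θ₁ θ₂ hstat hvar
end

section
/- Let X ⊆ ℝᵈ be a nonempty closed convex set of diameter at most R. For t = 1,…,T let f_t : ℝᵈ → ℝ be convex and differentiable with ‖∇f_t(x)‖ ≤ G for all x ∈ X. Fix η > 0 and run projected online gradient descent x_{t+1} = Π_X(x_t − η·∇f_t(x_t)) from x₁ ∈ X. Then for every comparator sequence u₁, …, u_T ∈ X with path length D = Σ_{t=1}^{T−1} ‖u_{t+1} − u_t‖, the dynamic regret satisfies Σ_{t=1}^T (f_t(x_t) − f_t(u_t)) ≤ R²/(2η) + R·D/η + η·G²·T/2. -/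
/-!
Projection onto a convex set does not increase the distance to points of the set, so each
round of projected gradient descent satisfies
`f_t(x_t) - f_t(u_t) ≤ (‖x_t - u_t‖² - ‖x_{t+1} - u_t‖²) / (2η) + η‖∇f_t(x_t)‖² / 2`.
Against a fixed comparator these bounds telescope. When the comparator moves from `u_t` to
`u_{t+1}`, the potential `‖x_{t+1} - ·‖²` grows by at most `2R‖u_{t+1} - u_t‖`, and this is
the source of the drift term `R D / η`.
-/

open scoped RealInnerProductSpace

theorem ConvexOn.add_fderiv_le {E : Type*} [NormedAddCommGroup E] [NormedSpace ℝ E]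
    {s : Set E} {f : E → ℝ} {f' : E →L[ℝ] ℝ} {x y : E} (hf : ConvexOn ℝ s f)
    (hx : x ∈ s) (hy : y ∈ s) (hf' : HasFDerivAt f f' x) :
    f x + f' (y - x) ≤ f y := by
  set ℓ : ℝ →ᵃ[ℝ] E := AffineMap.lineMap x y
  have hline : ConvexOn ℝ (ℓ ⁻¹' s) (f ∘ ℓ) := hf.comp_affineMap ℓ
  have hderiv : HasDerivAt (f ∘ ℓ) (f' (y - x)) 0 := by
    have h := AffineMap.hasDerivAt_lineMap (a := x) (b := y) (x := (0 : ℝ))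
    rw [← AffineMap.lineMap_apply_zero (k := ℝ) x y] at hf'
    exact hf'.comp_hasDerivAt 0 h
  have hℓ0 : ℓ 0 = x := AffineMap.lineMap_apply_zero x y
  have hℓ1 : ℓ 1 = y := AffineMap.lineMap_apply_one x y
  have hslope := hline.le_slope_of_hasDerivAt (x := 0) (y := 1) (by simpa [hℓ0])
    (by simpa [hℓ1]) one_pos hderiv
  rw [slope_def_field, Function.comp_apply, Function.comp_apply, hℓ0, hℓ1, sub_zero,
    div_one] at hslope
  linarith

theorem Convex.norm_sub_le_of_forall_dist_le {F : Type*} [NormedAddCommGroup F]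
    [InnerProductSpace ℝ F] {K : Set F} (hK : Convex ℝ K) {z p y : F} (hp : p ∈ K)
    (hmin : ∀ w ∈ K, dist p z ≤ dist w z) (hy : y ∈ K) : ‖p - y‖ ≤ ‖z - y‖ := by
  have : Nonempty K := ⟨⟨p, hp⟩⟩
  have hinf : ‖z - p‖ = ⨅ w : K, ‖z - w‖ :=
    le_antisymm (le_ciInf fun w => by simpa [dist_eq_norm, norm_sub_rev] using hmin w w.2)
      (ciInf_le (f := fun w : K => ‖z - w‖) ⟨0, by rintro _ ⟨w, rfl⟩; positivity⟩ ⟨p, hp⟩)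
  have hvar : ⟪z - p, y - p⟫ ≤ 0 := (norm_eq_iInf_iff_real_inner_le_zero hK hp).mp hinf y hy
  have hexpand : ‖z - y‖ ^ 2 = ‖z - p‖ ^ 2 - 2 * ⟪z - p, y - p⟫ + ‖p - y‖ ^ 2 := by
    rw [show z - y = (z - p) - (y - p) by abel, norm_sub_sq_real, norm_sub_rev y p]
  refine (pow_le_pow_iff_left₀ (norm_nonneg _) (norm_nonneg _) two_ne_zero).mp ?_
  nlinarith [sq_nonneg ‖z - p‖]

theorem inner_le_of_norm_sub_le_norm_sub_smul {F : Type*} [NormedAddCommGroup F]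
    [InnerProductSpace ℝ F] {η : ℝ} (hη : 0 < η) {g x u p : F} (hp : ‖p - u‖ ≤ ‖x - η • g - u‖) :
    ⟪g, x - u⟫ ≤ (‖x - u‖ ^ 2 - ‖p - u‖ ^ 2) / (2 * η) + η * ‖g‖ ^ 2 / 2 := by
  have hexpand : ‖x - η • g - u‖ ^ 2 = ‖x - u‖ ^ 2 - 2 * η * ⟪g, x - u⟫ + η ^ 2 * ‖g‖ ^ 2 := by
    rw [show x - η • g - u = (x - u) - η • g by abel, norm_sub_sq_real, real_inner_smul_right,
      real_inner_comm, norm_smul, Real.norm_of_nonneg hη.le]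
    ring
  have hsq : ‖p - u‖ ^ 2 ≤ ‖x - η • g - u‖ ^ 2 := pow_le_pow_left₀ (norm_nonneg _) hp 2
  rw [div_add' _ _ _ (by positivity), le_div_iff₀ (by positivity)]
  nlinarith

theorem sq_norm_sub_le_sq_norm_sub_add {E : Type*} [SeminormedAddCommGroup E] {a b c : E} {R : ℝ}
    (h : ‖a - b‖ ≤ R) : ‖a - b‖ ^ 2 ≤ ‖a - c‖ ^ 2 + 2 * R * ‖b - c‖ := by
  have htri : ‖a - b‖ ≤ ‖a - c‖ + ‖b - c‖ :=
    (norm_sub_le_norm_sub_add_norm_sub a c b).trans_eq (by rw [norm_sub_rev c b])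
  rcases le_total ‖a - b‖ ‖a - c‖ with hle | hge
  · nlinarith [norm_nonneg (a - b), norm_nonneg (b - c)]
  · nlinarith [mul_le_mul (sub_le_iff_le_add'.mpr htri) (add_le_add h (hge.trans h))
      (by positivity) (norm_nonneg (b - c))]

theorem Finset.sum_range_succ_sub_le {a b c : ℕ → ℝ} {n : ℕ} {A : ℝ} (ha : a 0 ≤ A)
    (hb : 0 ≤ b n) (hab : ∀ t < n, a (t + 1) ≤ b t + c t) :
    ∑ t ∈ Finset.range (n + 1), (a t - b t) ≤ A + ∑ t ∈ Finset.range n, c t := by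
  have hshift : ∑ t ∈ Finset.range n, a (t + 1) ≤ ∑ t ∈ Finset.range n, (b t + c t) :=
    Finset.sum_le_sum fun t ht => hab t (Finset.mem_range.mp ht)
  rw [Finset.sum_add_distrib] at hshift
  rw [Finset.sum_sub_distrib, Finset.sum_range_succ', Finset.sum_range_succ b]
  linarith

theorem ConvexOn.sub_le_of_norm_sub_le_norm_sub_smul {F : Type*} [NormedAddCommGroup F]
    [InnerProductSpace ℝ F] [CompleteSpace F] {s : Set F} {f : F → ℝ} (hf : ConvexOn ℝ s f)
    {x u p : F} (hx : x ∈ s) (hu : u ∈ s) (hdf : DifferentiableAt ℝ f x) {η G : ℝ} (hη : 0 < η)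
    (hp : ‖p - u‖ ≤ ‖x - η • gradient f x - u‖) (hG : ‖gradient f x‖ ≤ G) :
    f x - f u ≤ (‖x - u‖ ^ 2 - ‖p - u‖ ^ 2) / (2 * η) + η * G ^ 2 / 2 := by
  have hfirst := hf.add_fderiv_le hx hu hdf.hasGradientAt.hasFDerivAt
  rw [InnerProductSpace.toDual_apply_apply, ← neg_sub x u, inner_neg_right] at hfirst
  have hG2 : η * ‖gradient f x‖ ^ 2 / 2 ≤ η * G ^ 2 / 2 := by gcongr
  linarith [inner_le_of_norm_sub_le_norm_sub_smul hη hp]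

theorem ogd_dynamic_regret_general
    (d T : ℕ) (X : Set (EuclideanSpace ℝ (Fin d)))
    (hconv : Convex ℝ X)
    (R G : ℝ)
    (hdiam : ∀ u ∈ X, ∀ v ∈ X, ‖u - v‖ ≤ R)
    (f : ℕ → EuclideanSpace ℝ (Fin d) → ℝ)
    (hconvf : ∀ t, ConvexOn ℝ Set.univ (f t))
    (hdiff : ∀ t, Differentiable ℝ (f t))
    (hgrad : ∀ t, ∀ y ∈ X, ‖gradient (f t) y‖ ≤ G)
    (η : ℝ) (hη : 0 < η)
    (proj : EuclideanSpace ℝ (Fin d) → EuclideanSpace ℝ (Fin d))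
    (hproj_mem : ∀ z, proj z ∈ X)
    (hproj_min : ∀ z, ∀ y ∈ X, dist (proj z) z ≤ dist y z)
    (x : ℕ → EuclideanSpace ℝ (Fin d))
    (hx0 : x 0 ∈ X)
    (hrec : ∀ t, x (t + 1) = proj (x t - η • gradient (f t) (x t)))
    (u : ℕ → EuclideanSpace ℝ (Fin d))
    (hu : ∀ t < T, u t ∈ X) :
    ∑ t ∈ Finset.range T, (f t (x t) - f t (u t)) ≤
      R ^ 2 / (2 * η) +
        R * (∑ t ∈ Finset.range (T - 1), ‖u (t + 1) - u t‖) / η +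
        η * G ^ 2 * T / 2 := by
  have hxX : ∀ t, x t ∈ X := Nat.rec hx0 fun t _ => hrec t ▸ hproj_mem _
  have hround : ∀ t < T, f t (x t) - f t (u t) ≤
      (‖x t - u t‖ ^ 2 - ‖x (t + 1) - u t‖ ^ 2) / (2 * η) + η * G ^ 2 / 2 := by
    intro t ht
    have hp : ‖x (t + 1) - u t‖ ≤ ‖x t - η • gradient (f t) (x t) - u t‖ :=
      hrec t ▸ hconv.norm_sub_le_of_forall_dist_le (hproj_mem _) (hproj_min _) (hu t ht)
    exact (hconvf t).sub_le_of_norm_sub_le_norm_sub_smul trivial trivial (hdiff t _) hη hp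
      (hgrad t _ (hxX t))
  rcases T with _ | n
  · simp only [Finset.range_zero, Finset.sum_empty, zero_tsub, mul_zero, zero_div, add_zero,
      CharP.cast_eq_zero]
    positivity
  have hdrift : ∑ t ∈ Finset.range (n + 1), (‖x t - u t‖ ^ 2 - ‖x (t + 1) - u t‖ ^ 2) ≤
      R ^ 2 + ∑ t ∈ Finset.range n, 2 * R * ‖u (t + 1) - u t‖ := by
    refine Finset.sum_range_succ_sub_le ?_ (sq_nonneg _) fun t ht => ?_
    · exact pow_le_pow_left₀ (norm_nonneg _) (hdiam _ hx0 _ (hu 0 n.succ_pos)) 2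
    · exact sq_norm_sub_le_sq_norm_sub_add (hdiam _ (hxX _) _ (hu _ (by omega)))
  calc ∑ t ∈ Finset.range (n + 1), (f t (x t) - f t (u t))
      ≤ ∑ t ∈ Finset.range (n + 1),
          ((‖x t - u t‖ ^ 2 - ‖x (t + 1) - u t‖ ^ 2) / (2 * η) + η * G ^ 2 / 2) :=
        Finset.sum_le_sum fun t ht => hround t (Finset.mem_range.mp ht)
    _ ≤ (R ^ 2 + ∑ t ∈ Finset.range n, 2 * R * ‖u (t + 1) - u t‖) / (2 * η)
          + (n + 1) * (η * G ^ 2 / 2) := by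
        rw [Finset.sum_add_distrib, ← Finset.sum_div, Finset.sum_const, Finset.card_range,
          nsmul_eq_mul]
        push_cast
        gcongr
    _ = _ := by
        rw [← Finset.mul_sum, Nat.add_sub_cancel]
        push_cast
        field_simp

/-- Dynamic regret bound for projected online gradient descent against a
drifting comparator sequence `u₁, …, u_T` with path length
`D = Σ_t ‖u_{t+1} − u_t‖`:
`Σ_{t<T} (f_t(x_t) − f_t(u_t)) ≤ R²/(2η) + RD/η + ηG²T/2`. -/
theorem ogd_dynamic_regret
    (d T : ℕ) (X : Set (EuclideanSpace ℝ (Fin d)))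
    (hne : X.Nonempty) (hclosed : IsClosed X) (hconv : Convex ℝ X)
    (R G : ℝ)
    (hdiam : ∀ u ∈ X, ∀ v ∈ X, ‖u - v‖ ≤ R)
    (f : ℕ → EuclideanSpace ℝ (Fin d) → ℝ)
    (hconvf : ∀ t, ConvexOn ℝ Set.univ (f t))
    (hdiff : ∀ t, Differentiable ℝ (f t))
    (hgrad : ∀ t, ∀ y ∈ X, ‖gradient (f t) y‖ ≤ G)
    (η : ℝ) (hη : 0 < η)
    (proj : EuclideanSpace ℝ (Fin d) → EuclideanSpace ℝ (Fin d))
    (hproj_mem : ∀ z, proj z ∈ X)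
    (hproj_min : ∀ z, ∀ y ∈ X, dist (proj z) z ≤ dist y z)
    (x : ℕ → EuclideanSpace ℝ (Fin d))
    (hx0 : x 0 ∈ X)
    (hrec : ∀ t, x (t + 1) = proj (x t - η • gradient (f t) (x t)))
    (u : ℕ → EuclideanSpace ℝ (Fin d))
    (hu : ∀ t < T, u t ∈ X) :
    ∑ t ∈ Finset.range T, (f t (x t) - f t (u t)) ≤
      R ^ 2 / (2 * η) +
        R * (∑ t ∈ Finset.range (T - 1), ‖u (t + 1) - u t‖) / η +
        η * G ^ 2 * T / 2 :=
  ogd_dynamic_regret_general d T X hconv R G hdiam f hconvf hdiff hgrad η hη proj hproj_mem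
    hproj_min x hx0 hrec u hu
end

section
/- Let Σ ∈ ℝⁿˣⁿ be symmetric with m·‖x‖² ≤ xᵀΣx ≤ M·‖x‖² for all x ∈ ℝⁿ, where 0 < m ≤ M, let μ, c ∈ ℝⁿ, and let θ₀ > 0. For θ ≥ θ₀ let x*(θ) denote the (unique) maximizer of f_θ(x) = μᵀx − (θ/2)·xᵀΣx − cᵀx over the standard simplex X = {x ∈ ℝⁿ : 𝟙ᵀx = 1, x ≥ 0}. Then for all θ₁, θ₂ ≥ θ₀, ‖x*(θ₁) − x*(θ₂)‖ ≤ |θ₁ − θ₂|·M/(θ₀·m). -/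
open Matrix Filter Set Topology

/-!
At a maximizer `x` of the concave quadratic `ℓ - κ B` over a convex set, the slope towards any
other feasible point `y` is nonpositive, so the objective drops by at least `κ B (y - x) (y - x)`
at `y`. Comparing `x₁ = x*(θ₁)` with `x₂ = x*(θ₂)` in both directions and adding, the linear
parts cancel and `(θ₁ + θ₂) B d d ≤ (θ₂ - θ₁) B d (x₁ + x₂)` with `d = x₁ - x₂`. Cauchy–Schwarz
for `B` bounds the right side by `|θ₁ - θ₂| M ‖d‖ ‖x₁ + x₂‖`, and `‖x₁ + x₂‖ ≤ 2` on the simplex.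
-/

theorem nonpos_of_forall_le_mul {a b : ℝ} (h : ∀ t ∈ Ioc (0 : ℝ) 1, a ≤ b * t) : a ≤ 0 := by
  have hlim : Tendsto (fun t : ℝ => b * t) (𝓝[>] 0) (𝓝 0) := by
    simpa using ((continuous_const_mul b).tendsto 0).mono_left nhdsWithin_le_nhds
  exact ge_of_tendsto hlim (eventually_of_mem (Ioc_mem_nhdsGT one_pos) h)

section Module

variable {E : Type*} [AddCommGroup E] [Module ℝ E] (ℓ : E →ₗ[ℝ] ℝ) (B : LinearMap.BilinForm ℝ E)

lemma sub_mul_apply_add_smul (κ t : ℝ) (x d : E) :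
    ℓ (x + t • d) - κ * B (x + t • d) (x + t • d) =
      ℓ x - κ * B x x + t * (ℓ d - κ * (B x d + B d x)) - t ^ 2 * (κ * B d d) := by
  simp only [map_add, map_smul, LinearMap.add_apply, LinearMap.smul_apply, smul_eq_mul]
  ring

theorem sub_mul_apply_add_mul_apply_sub_le_of_isMaxOn {K : Set E} (hK : Convex ℝ K) {κ : ℝ}
    {x y : E} (hx : x ∈ K) (hy : y ∈ K) (hmax : IsMaxOn (fun z => ℓ z - κ * B z z) K x) :
    ℓ y - κ * B y y + κ * B (y - x) (y - x) ≤ ℓ x - κ * B x x := by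
  have hslope : ℓ (y - x) - κ * (B x (y - x) + B (y - x) x) ≤ 0 := by
    refine nonpos_of_forall_le_mul (b := κ * B (y - x) (y - x)) fun t ht => ?_
    have hmem : x + t • (y - x) ∈ K := hK.add_smul_sub_mem hx hy ⟨ht.1.le, ht.2⟩
    have hle := isMaxOn_iff.1 hmax _ hmem
    simp only [sub_mul_apply_add_smul] at hle
    nlinarith [ht.1]
  have hy_eq := sub_mul_apply_add_smul ℓ B κ 1 x (y - x)
  rw [one_smul, add_sub_cancel] at hy_eq
  linarith

theorem add_mul_apply_sub_le_of_isMaxOn {K : Set E} (hK : Convex ℝ K) (hB : B.IsSymm)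
    {θ₁ θ₂ : ℝ} {x₁ x₂ : E} (hx₁ : x₁ ∈ K) (hx₂ : x₂ ∈ K)
    (hmax₁ : IsMaxOn (fun z => ℓ z - θ₁ / 2 * B z z) K x₁)
    (hmax₂ : IsMaxOn (fun z => ℓ z - θ₂ / 2 * B z z) K x₂) :
    (θ₁ + θ₂) * B (x₁ - x₂) (x₁ - x₂) ≤ (θ₂ - θ₁) * B (x₁ - x₂) (x₁ + x₂) := by
  have h₁ := sub_mul_apply_add_mul_apply_sub_le_of_isMaxOn ℓ B hK hx₁ hx₂ hmax₁
  have h₂ := sub_mul_apply_add_mul_apply_sub_le_of_isMaxOn ℓ B hK hx₂ hx₁ hmax₂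
  have hneg : B (x₂ - x₁) (x₂ - x₁) = B (x₁ - x₂) (x₁ - x₂) := by
    rw [← neg_sub x₁ x₂, map_neg, map_neg, LinearMap.neg_apply, neg_neg]
  have hdiff : B (x₁ - x₂) (x₁ + x₂) = B x₁ x₁ - B x₂ x₂ := by
    simp only [map_sub, map_add, LinearMap.sub_apply, hB.eq x₂ x₁]
    ring
  rw [hneg] at h₁
  rw [hdiff]
  linarith

end Module

section Normed

variable {E : Type*} [SeminormedAddCommGroup E] [Module ℝ E] (ℓ : E →ₗ[ℝ] ℝ)
  {B : LinearMap.BilinForm ℝ E} {m M : ℝ}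

lemma abs_apply_le_of_apply_self_le (hB : B.IsSymm) (hB₀ : ∀ u, 0 ≤ B u u) (hM : 0 ≤ M)
    (hub : ∀ u, B u u ≤ M * ‖u‖ ^ 2) (u v : E) : |B u v| ≤ M * ‖u‖ * ‖v‖ := by
  refine abs_le_of_sq_le_sq ?_ (by positivity)
  calc B u v ^ 2 ≤ B u u * B v v :=
        B.apply_sq_le_of_symm hB₀ (LinearMap.BilinForm.isSymm_iff.1 hB) u v
    _ ≤ (M * ‖u‖ ^ 2) * (M * ‖v‖ ^ 2) := mul_le_mul (hub u) (hub v) (hB₀ v) (by positivity)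
    _ = (M * ‖u‖ * ‖v‖) ^ 2 := by ring

theorem add_mul_norm_sub_le_of_isMaxOn {K : Set E} (hK : Convex ℝ K) (hB : B.IsSymm)
    (hm : 0 ≤ m) (hM : 0 ≤ M) (hlb : ∀ u, m * ‖u‖ ^ 2 ≤ B u u) (hub : ∀ u, B u u ≤ M * ‖u‖ ^ 2)
    {θ₁ θ₂ : ℝ} (hθ : 0 ≤ θ₁ + θ₂) {x₁ x₂ : E} (hx₁ : x₁ ∈ K) (hx₂ : x₂ ∈ K)
    (hmax₁ : IsMaxOn (fun z => ℓ z - θ₁ / 2 * B z z) K x₁)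
    (hmax₂ : IsMaxOn (fun z => ℓ z - θ₂ / 2 * B z z) K x₂) :
    (θ₁ + θ₂) * m * ‖x₁ - x₂‖ ≤ |θ₁ - θ₂| * M * ‖x₁ + x₂‖ := by
  have hB₀ u : 0 ≤ B u u := (by positivity : 0 ≤ m * ‖u‖ ^ 2).trans (hlb u)
  have hcross : (θ₂ - θ₁) * B (x₁ - x₂) (x₁ + x₂) ≤ |θ₁ - θ₂| * (M * ‖x₁ - x₂‖ * ‖x₁ + x₂‖) := by
    rw [abs_sub_comm]
    exact (le_abs_self _).trans <| (abs_mul _ _).trans_le <|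
      mul_le_mul_of_nonneg_left (abs_apply_le_of_apply_self_le hB hB₀ hM hub _ _) (abs_nonneg _)
  have hsq : (θ₁ + θ₂) * m * ‖x₁ - x₂‖ * ‖x₁ - x₂‖ ≤ |θ₁ - θ₂| * M * ‖x₁ + x₂‖ * ‖x₁ - x₂‖ := by
    have := add_mul_apply_sub_le_of_isMaxOn ℓ B hK hB hx₁ hx₂ hmax₁ hmax₂
    nlinarith [mul_le_mul_of_nonneg_left (hlb (x₁ - x₂)) hθ]
  rcases (norm_nonneg (x₁ - x₂)).eq_or_lt with h | h
  · rw [← h, mul_zero]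
    positivity
  · exact le_of_mul_le_mul_right hsq h

end Normed

section Euclidean

variable {ι : Type*} [Fintype ι]

lemma EuclideanSpace.norm_le_one_of_sum_eq_one {x : EuclideanSpace ℝ ι} (hsum : ∑ i, x i = 1)
    (hx : ∀ i, 0 ≤ x i) : ‖x‖ ≤ 1 := by
  have hle : ∀ i, x i ≤ 1 := fun i =>
    hsum ▸ Finset.single_le_sum (fun j _ => hx j) (Finset.mem_univ i)
  have hsq : ‖x‖ ^ 2 ≤ 1 := by
    rw [EuclideanSpace.real_norm_sq_eq, ← hsum]
    exact Finset.sum_le_sum fun i _ => by nlinarith [hx i, hle i]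
  exact (sq_le_one_iff₀ (norm_nonneg x)).1 hsq

lemma convex_setOf_sum_eq_one_and_nonneg :
    Convex ℝ {x : EuclideanSpace ℝ ι | (∑ i, x i) = 1 ∧ ∀ i, 0 ≤ x i} := by
  have hpre : {x : EuclideanSpace ℝ ι | (∑ i, x i) = 1 ∧ ∀ i, 0 ≤ x i} =
      (WithLp.linearEquiv 2 ℝ (ι → ℝ)).toLinearMap ⁻¹' stdSimplex ℝ ι := by
    ext x
    simp [stdSimplex, and_comm]
  rw [hpre]
  exact (convex_stdSimplex ℝ ι).linear_preimage _

variable [DecidableEq ι]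

noncomputable def Matrix.toEuclideanBilin (S : Matrix ι ι ℝ) :
    LinearMap.BilinForm ℝ (EuclideanSpace ℝ ι) :=
  S.toBilin'.compl₁₂ (WithLp.linearEquiv 2 ℝ (ι → ℝ)).toLinearMap
    (WithLp.linearEquiv 2 ℝ (ι → ℝ)).toLinearMap

@[simp]
lemma Matrix.toEuclideanBilin_apply (S : Matrix ι ι ℝ) (x y : EuclideanSpace ℝ ι) :
    S.toEuclideanBilin x y = x ⬝ᵥ S *ᵥ y := by
  simp [Matrix.toEuclideanBilin, Matrix.toBilin'_apply']

lemma Matrix.IsSymm.isSymm_toEuclideanBilin {S : Matrix ι ι ℝ} (hS : S.IsSymm) :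
    S.toEuclideanBilin.IsSymm :=
  ⟨fun x y => by
    simpa [Matrix.toBilin'_apply'] using (Matrix.isSymm_toBilin'_iff_isSymm.2 hS).eq x y⟩

end Euclidean

/-- Lipschitz dependence of the optimal portfolio on the risk-aversion
parameter: if `Σ` is symmetric with `m‖x‖² ≤ xᵀΣx ≤ M‖x‖²` (`0 < m ≤ M`) and
`x*(θ)` maximizes `f_θ(x) = μᵀx − (θ/2)xᵀΣx − cᵀx` over the simplex for each
`θ ≥ θ₀ > 0`, then `‖x*(θ₁) − x*(θ₂)‖ ≤ |θ₁ − θ₂| M/(θ₀ m)`. -/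
theorem optimal_portfolio_lipschitz_in_theta
    (n : ℕ) (S : Matrix (Fin n) (Fin n) ℝ) (hSym : S.IsSymm)
    (m M : ℝ) (hm : 0 < m) (hmM : m ≤ M)
    (hlb : ∀ x : EuclideanSpace ℝ (Fin n), m * ‖x‖ ^ 2 ≤ x ⬝ᵥ S.mulVec x)
    (hub : ∀ x : EuclideanSpace ℝ (Fin n), x ⬝ᵥ S.mulVec x ≤ M * ‖x‖ ^ 2)
    (μ c : Fin n → ℝ) (θ₀ : ℝ) (hθ₀ : 0 < θ₀)
    (xs : ℝ → EuclideanSpace ℝ (Fin n))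
    (hmem : ∀ θ, θ₀ ≤ θ → (∑ i, xs θ i) = 1 ∧ ∀ i, 0 ≤ xs θ i)
    (hmax : ∀ θ, θ₀ ≤ θ → ∀ x : EuclideanSpace ℝ (Fin n),
        ((∑ i, x i) = 1 ∧ ∀ i, 0 ≤ x i) →
        μ ⬝ᵥ x - θ / 2 * (x ⬝ᵥ S.mulVec x) - c ⬝ᵥ x ≤
          μ ⬝ᵥ (xs θ) - θ / 2 * (xs θ ⬝ᵥ S.mulVec (xs θ)) - c ⬝ᵥ (xs θ)) :
    ∀ θ₁ θ₂, θ₀ ≤ θ₁ → θ₀ ≤ θ₂ →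
      ‖xs θ₁ - xs θ₂‖ ≤ |θ₁ - θ₂| * M / (θ₀ * m) := by
  intro θ₁ θ₂ h₁ h₂
  let ℓ : EuclideanSpace ℝ (Fin n) →ₗ[ℝ] ℝ :=
    (dotProductBilin ℝ ℝ (μ - c)).comp (WithLp.linearEquiv 2 ℝ (Fin n → ℝ)).toLinearMap
  have hℓ (x : EuclideanSpace ℝ (Fin n)) : ℓ x = μ ⬝ᵥ x - c ⬝ᵥ x := by simp [ℓ]
  have hmax' (θ : ℝ) (hθ : θ₀ ≤ θ) : IsMaxOn (fun x => ℓ x - θ / 2 * S.toEuclideanBilin x x)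
      {x | (∑ i, x i) = 1 ∧ ∀ i, 0 ≤ x i} (xs θ) := isMaxOn_iff.2 fun x hx => by
    have := hmax θ hθ x hx
    simp only [hℓ, Matrix.toEuclideanBilin_apply]
    linarith
  have hM : 0 ≤ M := hm.le.trans hmM
  have hlip := add_mul_norm_sub_le_of_isMaxOn ℓ convex_setOf_sum_eq_one_and_nonneg
    hSym.isSymm_toEuclideanBilin hm.le hM (by simpa using hlb) (by simpa using hub)
    (by linarith) (hmem θ₁ h₁) (hmem θ₂ h₂) (hmax' θ₁ h₁) (hmax' θ₂ h₂)
  have hsum : ‖xs θ₁ + xs θ₂‖ ≤ 2 := (norm_add_le _ _).trans <| by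
    linarith [EuclideanSpace.norm_le_one_of_sum_eq_one (hmem θ₁ h₁).1 (hmem θ₁ h₁).2,
      EuclideanSpace.norm_le_one_of_sum_eq_one (hmem θ₂ h₂).1 (hmem θ₂ h₂).2]
  have hlow : 2 * θ₀ * m * ‖xs θ₁ - xs θ₂‖ ≤ (θ₁ + θ₂) * m * ‖xs θ₁ - xs θ₂‖ := by
    gcongr
    linarith
  have hup : |θ₁ - θ₂| * M * ‖xs θ₁ + xs θ₂‖ ≤ |θ₁ - θ₂| * M * 2 := by gcongr
  rw [le_div_iff₀ (by positivity)]
  linarith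
end

section
/- Let Σ ∈ ℝⁿˣⁿ be symmetric with m·‖x‖² ≤ xᵀΣx ≤ M·‖x‖² for all x ∈ ℝⁿ, where 0 < m ≤ M, let μ, c ∈ ℝⁿ, and let θ₀ > 0. For θ ≥ θ₀ let x*(θ) denote the unique maximizer of f_θ(x) = μᵀx − (θ/2)·xᵀΣx − cᵀx over the standard simplex X = {x ∈ ℝⁿ : 𝟙ᵀx = 1, x ≥ 0}. Then for all θ*, θ̂ ≥ θ₀, the utility gap satisfies 0 ≤ f_{θ*}(x*(θ*)) − f_{θ*}(x*(θ̂)) ≤ (‖μ‖ + ‖c‖ + θ*·M)·M·|θ* − θ̂|/(θ₀·m). -/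
/-!
Comparing the two optimality conditions, the loss from maximizing `g - θ̂/2 · q` instead of
`g - θ*/2 · q` is at most `(θ̂ - θ*)/2 · (q x*(θ*) - q x*(θ̂))`, with `q x = xᵀΣx`. On the simplex
`‖x‖ ≤ 1`, so `0 ≤ q ≤ M` there and the loss is at most `|θ* - θ̂| M / 2`; this is dominated by the
stated bound because `θ₀ m ≤ θ* M`.
-/

open Matrix

theorem sub_le_half_abs_mul_abs_of_le {α : Type*} {g q : α → ℝ} {a b : ℝ} {x y : α}
    (hy : g x - b / 2 * q x ≤ g y - b / 2 * q y) :
    (g x - a / 2 * q x) - (g y - a / 2 * q y) ≤ |b - a| / 2 * |q x - q y| := by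
  have h := le_abs_self ((b - a) * (q x - q y))
  rw [abs_mul] at h
  linarith

section Simplex

variable {ι : Type*} [Fintype ι]

theorem EuclideanSpace.norm_sq_le_one_of_sum_eq_one {x : EuclideanSpace ℝ ι}
    (hsum : ∑ i, x i = 1) (hx : ∀ i, 0 ≤ x i) : ‖x‖ ^ 2 ≤ 1 := by
  rw [EuclideanSpace.real_norm_sq_eq, ← one_pow 2, ← hsum]
  exact Finset.sum_sq_le_sq_sum_of_nonneg fun i _ ↦ hx i

theorem dotProduct_mulVec_le_of_sum_eq_one {S : Matrix ι ι ℝ} {M : ℝ} (hM : 0 ≤ M)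
    (hub : ∀ x : EuclideanSpace ℝ ι, x ⬝ᵥ S *ᵥ x ≤ M * ‖x‖ ^ 2) {x : EuclideanSpace ℝ ι}
    (hsum : ∑ i, x i = 1) (hx : ∀ i, 0 ≤ x i) : x ⬝ᵥ S *ᵥ x ≤ M :=
  (hub x).trans <| mul_le_of_le_one_right hM <|
    EuclideanSpace.norm_sq_le_one_of_sum_eq_one hsum hx

end Simplex

theorem mul_le_add_mul_mul_mul_div {θ₀ θ m M K t : ℝ} (hθ₀ : 0 < θ₀) (hθ : θ₀ ≤ θ) (hm : 0 < m)
    (hmM : m ≤ M) (hK : 0 ≤ K) (ht : 0 ≤ t) :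
    t * M ≤ (K + θ * M) * M * t / (θ₀ * m) := by
  have hθm : θ₀ * m ≤ θ * M := mul_le_mul hθ hmM hm.le (hθ₀.trans_le hθ).le
  rw [le_div_iff₀ (by positivity)]
  calc t * M * (θ₀ * m) ≤ t * M * (K + θ * M) := by
        gcongr
        · exact mul_nonneg ht (hm.le.trans hmM)
        · linarith
    _ = (K + θ * M) * M * t := by ring

theorem utility_gap_bound_general
    (n : ℕ) (S : Matrix (Fin n) (Fin n) ℝ)
    (m M : ℝ) (hm : 0 < m) (hmM : m ≤ M)
    (hlb : ∀ x : EuclideanSpace ℝ (Fin n), m * ‖x‖ ^ 2 ≤ x ⬝ᵥ S.mulVec x)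
    (hub : ∀ x : EuclideanSpace ℝ (Fin n), x ⬝ᵥ S.mulVec x ≤ M * ‖x‖ ^ 2)
    (μ c : EuclideanSpace ℝ (Fin n)) (θ₀ : ℝ) (hθ₀ : 0 < θ₀)
    (xs : ℝ → EuclideanSpace ℝ (Fin n))
    (hmem : ∀ θ, θ₀ ≤ θ → (∑ i, xs θ i) = 1 ∧ ∀ i, 0 ≤ xs θ i)
    (hmax : ∀ θ, θ₀ ≤ θ → ∀ x : EuclideanSpace ℝ (Fin n),
        ((∑ i, x i) = 1 ∧ ∀ i, 0 ≤ x i) →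
        μ ⬝ᵥ x - θ / 2 * (x ⬝ᵥ S.mulVec x) - c ⬝ᵥ x ≤
          μ ⬝ᵥ (xs θ) - θ / 2 * (xs θ ⬝ᵥ S.mulVec (xs θ)) - c ⬝ᵥ (xs θ)) :
    ∀ θstar θhat, θ₀ ≤ θstar → θ₀ ≤ θhat →
      0 ≤ (μ ⬝ᵥ (xs θstar) - θstar / 2 * (xs θstar ⬝ᵥ S.mulVec (xs θstar)) -
              c ⬝ᵥ (xs θstar)) -
          (μ ⬝ᵥ (xs θhat) - θstar / 2 * (xs θhat ⬝ᵥ S.mulVec (xs θhat)) -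
              c ⬝ᵥ (xs θhat)) ∧
      (μ ⬝ᵥ (xs θstar) - θstar / 2 * (xs θstar ⬝ᵥ S.mulVec (xs θstar)) -
              c ⬝ᵥ (xs θstar)) -
          (μ ⬝ᵥ (xs θhat) - θstar / 2 * (xs θhat ⬝ᵥ S.mulVec (xs θhat)) -
              c ⬝ᵥ (xs θhat)) ≤
        (‖μ‖ + ‖c‖ + θstar * M) * M * |θstar - θhat| / (θ₀ * m) := by
  intro θstar θhat hs hh
  have hquad_mem : ∀ θ, θ₀ ≤ θ →
      0 ≤ xs θ ⬝ᵥ S *ᵥ xs θ ∧ xs θ ⬝ᵥ S *ᵥ xs θ ≤ M := fun θ hθ ↦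
    ⟨(by positivity : 0 ≤ m * ‖xs θ‖ ^ 2).trans (hlb _),
      dotProduct_mulVec_le_of_sum_eq_one (hm.le.trans hmM) hub (hmem θ hθ).1 (hmem θ hθ).2⟩
  obtain ⟨hA₀, hAM⟩ := hquad_mem θstar hs
  obtain ⟨hB₀, hBM⟩ := hquad_mem θhat hh
  refine ⟨sub_nonneg.2 (hmax θstar hs _ (hmem θhat hh)), ?_⟩
  calc _ ≤ |θhat - θstar| / 2 * |xs θstar ⬝ᵥ S *ᵥ xs θstar - xs θhat ⬝ᵥ S *ᵥ xs θhat| := by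
        have := sub_le_half_abs_mul_abs_of_le (g := fun x ↦ μ ⬝ᵥ x - c ⬝ᵥ x) (q := fun x ↦ x ⬝ᵥ S *ᵥ x)
          (a := θstar) (b := θhat) (x := xs θstar) (y := xs θhat)
          (by linarith [hmax θhat hh (xs θstar) (hmem θstar hs)])
        linarith
    _ ≤ |θstar - θhat| * M := by
        rw [abs_sub_comm θhat]
        have := abs_sub_le_of_nonneg_of_le hA₀ hAM hB₀ hBM
        have := abs_nonneg (θstar - θhat)
        nlinarith
    _ ≤ _ := mul_le_add_mul_mul_mul_div (K := ‖μ‖ + ‖c‖) hθ₀ hs hm hmM (by positivity) (abs_nonneg _)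

/-- Utility-gap (welfare loss) bound under risk-aversion misspecification:
with `Σ` symmetric, `m‖x‖² ≤ xᵀΣx ≤ M‖x‖²` (`0 < m ≤ M`), and `x*(θ)` the
maximizer of `f_θ(x) = μᵀx − (θ/2)xᵀΣx − cᵀx` over the simplex for `θ ≥ θ₀ > 0`,
the welfare loss satisfies
`0 ≤ f_{θ*}(x*(θ*)) − f_{θ*}(x*(θ̂)) ≤ (‖μ‖ + ‖c‖ + θ*M)·M·|θ* − θ̂|/(θ₀ m)`. -/
theorem utility_gap_bound
    (n : ℕ) (S : Matrix (Fin n) (Fin n) ℝ) (hSym : S.IsSymm)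
    (m M : ℝ) (hm : 0 < m) (hmM : m ≤ M)
    (hlb : ∀ x : EuclideanSpace ℝ (Fin n), m * ‖x‖ ^ 2 ≤ x ⬝ᵥ S.mulVec x)
    (hub : ∀ x : EuclideanSpace ℝ (Fin n), x ⬝ᵥ S.mulVec x ≤ M * ‖x‖ ^ 2)
    (μ c : EuclideanSpace ℝ (Fin n)) (θ₀ : ℝ) (hθ₀ : 0 < θ₀)
    (xs : ℝ → EuclideanSpace ℝ (Fin n))
    (hmem : ∀ θ, θ₀ ≤ θ → (∑ i, xs θ i) = 1 ∧ ∀ i, 0 ≤ xs θ i)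
    (hmax : ∀ θ, θ₀ ≤ θ → ∀ x : EuclideanSpace ℝ (Fin n),
        ((∑ i, x i) = 1 ∧ ∀ i, 0 ≤ x i) →
        μ ⬝ᵥ x - θ / 2 * (x ⬝ᵥ S.mulVec x) - c ⬝ᵥ x ≤
          μ ⬝ᵥ (xs θ) - θ / 2 * (xs θ ⬝ᵥ S.mulVec (xs θ)) - c ⬝ᵥ (xs θ))
    (huniq : ∀ θ, θ₀ ≤ θ → ∀ x : EuclideanSpace ℝ (Fin n),
        ((∑ i, x i) = 1 ∧ ∀ i, 0 ≤ x i) →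
        (μ ⬝ᵥ x - θ / 2 * (x ⬝ᵥ S.mulVec x) - c ⬝ᵥ x =
          μ ⬝ᵥ (xs θ) - θ / 2 * (xs θ ⬝ᵥ S.mulVec (xs θ)) - c ⬝ᵥ (xs θ)) →
        x = xs θ) :
    ∀ θstar θhat, θ₀ ≤ θstar → θ₀ ≤ θhat →
      0 ≤ (μ ⬝ᵥ (xs θstar) - θstar / 2 * (xs θstar ⬝ᵥ S.mulVec (xs θstar)) -
              c ⬝ᵥ (xs θstar)) -
          (μ ⬝ᵥ (xs θhat) - θstar / 2 * (xs θhat ⬝ᵥ S.mulVec (xs θhat)) -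
              c ⬝ᵥ (xs θhat)) ∧
      (μ ⬝ᵥ (xs θstar) - θstar / 2 * (xs θstar ⬝ᵥ S.mulVec (xs θstar)) -
              c ⬝ᵥ (xs θstar)) -
          (μ ⬝ᵥ (xs θhat) - θstar / 2 * (xs θhat ⬝ᵥ S.mulVec (xs θhat)) -
              c ⬝ᵥ (xs θhat)) ≤
        (‖μ‖ + ‖c‖ + θstar * M) * M * |θstar - θhat| / (θ₀ * m) :=
  utility_gap_bound_general n S m M hm hmM hlb hub μ c θ₀ hθ₀ xs hmem hmax
end
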